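/- arXiv:1711.10254 — 4 statements merged into one kernel-verified Lean document; each statement's English description precedes it below -/
import Mathlib

section
/- A symmetric block matrix [[M, Cᵀ],[C, 0]] with M positive semidefinite and C having full row rank is invertible if and only if M is positive definite on the null space of C. -/
open Matrix
/-- A symmetric block matrix [[M, Cᵀ],[C, 0]] with M positive semidefinite and C having
full row rank is invertible iff M is positive definite on the null space of C. -/
theorem stmt0 (n m : ℕ) (M : Matrix (Fin n) (Fin n) ℝ) (C : Matrix (Fin m) (Fin n) ℝ)
    (hMsym : M.IsSymm) (hMpsd : M.PosSemidef) (hC : C.rank = m) (hmn : m ≤ n) :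
    IsUnit (Matrix.fromBlocks M Cᵀ C 0).det ↔
      ∀ x : Fin n → ℝ, x ≠ 0 → C.mulVec x = 0 → 0 < x ⬝ᵥ M.mulVec x := by
  rw [← Matrix.isUnit_iff_isUnit_det, ← Matrix.mulVec_injective_iff_isUnit]
  constructor
  · intro hinj x hx hCx
    by_contra hle
    push_neg at hle
    have h0 : x ⬝ᵥ M *ᵥ x = 0 := le_antisymm hle (by simpa using hMpsd.dotProduct_mulVec_nonneg x)
    have hMx : M *ᵥ x = 0 := by
      refine (hMpsd.dotProduct_mulVec_zero_iff x).mp ?_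
      simpa using h0
    have hker : (fromBlocks M Cᵀ C 0) *ᵥ (Sum.elim x 0) = (fromBlocks M Cᵀ C 0) *ᵥ 0 := by
      rw [fromBlocks_mulVec, mulVec_zero]
      simp [hMx, hCx]
    have := hinj hker
    apply hx
    funext i
    exact congrFun this (Sum.inl i)
  · intro hpd
    -- rows of C are linearly independent
    have hrows : LinearIndependent ℝ (fun i => C i) := by
      rw [linearIndependent_iff_card_eq_finrank_span]
      have := C.rank_eq_finrank_span_row
      rw [hC] at this
      simp [Set.finrank, ← this]
      exact this
    have hCTinj : Function.Injective Cᵀ.mulVec := by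
      rw [Matrix.mulVec_injective_iff]
      exact hrows
    intro a b hab
    have hz : (fromBlocks M Cᵀ C 0) *ᵥ (a - b) = 0 := by
      rw [mulVec_sub, hab, sub_self]
    set z := a - b with hzdef
    have hzel : z = Sum.elim (fun i => z (Sum.inl i)) (fun j => z (Sum.inr j)) := by
      funext i; cases i <;> rfl
    set x := fun i => z (Sum.inl i)
    set y := fun j => z (Sum.inr j)
    rw [hzel, fromBlocks_mulVec] at hz
    have h1 : M *ᵥ x + Cᵀ *ᵥ y = 0 := by
      funext i; exact congrFun hz (Sum.inl i)
    have h2 : C *ᵥ x = 0 := by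
      have := fun j => congrFun hz (Sum.inr j)
      funext j
      simpa using this j
    have hq : x ⬝ᵥ M *ᵥ x = 0 := by
      have hMxv : M *ᵥ x = -(Cᵀ *ᵥ y) := eq_neg_of_add_eq_zero_left h1
      rw [hMxv, dotProduct_neg, dotProduct_mulVec, vecMul_transpose, h2, zero_dotProduct,
        neg_zero]
    have hx0 : x = 0 := by
      by_contra hx
      exact absurd hq (ne_of_gt (hpd x hx h2))
    have hy0 : y = 0 := by
      apply hCTinj
      rw [mulVec_zero]
      have := h1
      rw [hx0, mulVec_zero, zero_add] at this
      exact this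
    have : z = 0 := by
      rw [hzel, hx0, hy0]; funext i; cases i <;> rfl
    exact sub_eq_zero.mp this
end

section
/- If M is an n×n real symmetric positive semidefinite matrix and C is an m×n real matrix, then the KKT system [[M, Cᵀ],[C, 0]] [z; λ] = [-m; d] has a unique solution for every right-hand side if and only if M + CᵀC is positive definite and C has full row rank. -/
open Matrix

private lemma rank_eq_iff_injective {n m : ℕ} (C : Matrix (Fin m) (Fin n) ℝ) :
    C.rank = m ↔ Function.Injective Cᵀ.mulVecLin := by
  rw [← Matrix.rank_transpose, Matrix.rank, ← LinearMap.ker_eq_bot]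
  constructor
  · intro h
    have := LinearMap.finrank_range_add_finrank_ker Cᵀ.mulVecLin
    rw [h] at this
    have hker : Module.finrank ℝ (LinearMap.ker Cᵀ.mulVecLin) = 0 := by
      have hdim : Module.finrank ℝ ((Fin m) → ℝ) = m := by simp
      omega
    exact Submodule.finrank_eq_zero.mp hker
  · intro h
    have := LinearMap.finrank_range_add_finrank_ker Cᵀ.mulVecLin
    rw [h, finrank_bot] at this
    simpa using this

/-- The KKT system [[M, Cᵀ],[C, 0]][z; λ] = [-m; d] has a unique solution for every
right-hand side iff M + CᵀC is positive definite and C has full row rank. -/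
theorem stmt1 (n m : ℕ) (M : Matrix (Fin n) (Fin n) ℝ) (C : Matrix (Fin m) (Fin n) ℝ)
    (hMsym : M.IsSymm) (hMpsd : M.PosSemidef) :
    (∀ rhs : (Fin n ⊕ Fin m) → ℝ,
        ∃! sol : (Fin n ⊕ Fin m) → ℝ, (Matrix.fromBlocks M Cᵀ C 0).mulVec sol = rhs) ↔
      ((M + Cᵀ * C).PosDef ∧ C.rank = m) := by
  classical
  set K := Matrix.fromBlocks M Cᵀ C (0 : Matrix (Fin m) (Fin m) ℝ) with hK
  have hCT : Cᴴ = Cᵀ := by ext i j; simp [conjTranspose_apply]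
  have hCC : (Cᵀ * C).PosSemidef := by
    have := Matrix.posSemidef_conjTranspose_mul_self C
    rwa [hCT] at this
  have hS : (M + Cᵀ * C).PosSemidef := hMpsd.add hCC
  -- LHS ↔ trivial kernel
  have hlhs : (∀ rhs : (Fin n ⊕ Fin m) → ℝ, ∃! sol, K.mulVec sol = rhs) ↔
      (∀ v : (Fin n ⊕ Fin m) → ℝ, K.mulVec v = 0 → v = 0) := by
    rw [← Function.bijective_iff_existsUnique]
    constructor
    · intro h v hv
      exact h.injective (by simpa using hv)
    · intro h
      have hinj : Function.Injective K.mulVecLin := by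
        rw [← LinearMap.ker_eq_bot, LinearMap.ker_eq_bot']
        intro v hv
        exact h v hv
      exact ⟨hinj, LinearMap.injective_iff_surjective.mp hinj⟩
  rw [hlhs]
  constructor
  · intro h
    constructor
    · refine posDef_iff_dotProduct_mulVec.mpr ⟨hS.1, fun x hx => ?_⟩
      rcases lt_or_eq_of_le (hS.dotProduct_mulVec_nonneg x) with hlt | heq
      · exact hlt
      · exfalso
        have h0 : (M + Cᵀ * C) *ᵥ x = 0 := (hS.dotProduct_mulVec_zero_iff x).mp heq.symm
        -- then Mx = 0 and Cᵀ C x = 0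
        have hMx : M *ᵥ x = 0 ∧ (Cᵀ * C) *ᵥ x = 0 := by
          have hsum : star x ⬝ᵥ M *ᵥ x + star x ⬝ᵥ (Cᵀ * C) *ᵥ x = 0 := by
            rw [← dotProduct_add, ← add_mulVec, h0, dotProduct_zero]
          have h1 := hMpsd.dotProduct_mulVec_nonneg x
          have h2 := hCC.dotProduct_mulVec_nonneg x
          have e1 : star x ⬝ᵥ M *ᵥ x = 0 := by linarith
          have e2 : star x ⬝ᵥ (Cᵀ * C) *ᵥ x = 0 := by linarith
          exact ⟨(hMpsd.dotProduct_mulVec_zero_iff x).mp e1,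
            (hCC.dotProduct_mulVec_zero_iff x).mp e2⟩
        have hCx : C *ᵥ x = 0 := by
          have : star (C *ᵥ x) ⬝ᵥ (C *ᵥ x) = 0 := by
            have : star x ⬝ᵥ (Cᵀ * C) *ᵥ x = 0 := by
              rw [hMx.2, dotProduct_zero]
            rw [← Matrix.mulVec_mulVec] at this
            rw [dotProduct_mulVec] at this
            simpa [star_trivial, Matrix.vecMul_transpose, dotProduct_comm] using this
          exact (dotProduct_star_self_eq_zero).mp this
        have hv := h (Sum.elim x 0) (by
          rw [hK, Matrix.fromBlocks_mulVec]
          simp [hMx.1, hCx])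
        apply hx
        funext i
        exact congrFun hv (Sum.inl i)
    · rw [rank_eq_iff_injective]
      rw [← LinearMap.ker_eq_bot, LinearMap.ker_eq_bot']
      intro l hl
      have hv := h (Sum.elim 0 l) (by
        rw [hK, Matrix.fromBlocks_mulVec]
        simp only [Sum.elim_comp_inl, Sum.elim_comp_inr, Matrix.mulVec_zero, zero_add,
          Matrix.zero_mulVec, add_zero]
        rw [Matrix.mulVecLin_apply] at hl
        simp [hl])
      funext i
      exact congrFun hv (Sum.inr i)
  · rintro ⟨hpd, hrank⟩ v hv
    set z := v ∘ Sum.inl with hz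
    set l := v ∘ Sum.inr with hl
    rw [hK, Matrix.fromBlocks_mulVec] at hv
    have e1 : M *ᵥ z + Cᵀ *ᵥ l = 0 := by
      funext i; exact congrFun hv (Sum.inl i)
    have e2 : C *ᵥ z = 0 := by
      funext i
      have := congrFun hv (Sum.inr i)
      simpa using this
    -- zᵀ M z = 0
    have hzMz : z ⬝ᵥ M *ᵥ z = 0 := by
      have h1 : z ⬝ᵥ (M *ᵥ z + Cᵀ *ᵥ l) = 0 := by rw [e1, dotProduct_zero]
      have h2 : z ⬝ᵥ Cᵀ *ᵥ l = 0 := by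
        rw [dotProduct_mulVec, Matrix.vecMul_transpose, e2, zero_dotProduct]
      rw [dotProduct_add, h2, add_zero] at h1
      exact h1
    have hMz : M *ᵥ z = 0 := by
      have := (hMpsd.dotProduct_mulVec_zero_iff z).mp (by simpa [star_trivial] using hzMz)
      exact this
    have hz0 : z = 0 := by
      by_contra hne
      have := hpd.dotProduct_mulVec_pos hne
      have hzero : star z ⬝ᵥ (M + Cᵀ * C) *ᵥ z = 0 := by
        rw [add_mulVec, hMz, zero_add, ← Matrix.mulVec_mulVec, e2, Matrix.mulVec_zero,
          dotProduct_zero]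
      rw [hzero] at this
      exact lt_irrefl 0 this
    have hCl : Cᵀ *ᵥ l = 0 := by
      rw [hz0, Matrix.mulVec_zero, zero_add] at e1
      exact e1
    have hl0 : l = 0 := by
      have hinj := (rank_eq_iff_injective C).mp hrank
      rw [← LinearMap.ker_eq_bot, LinearMap.ker_eq_bot'] at hinj
      exact hinj l (by rw [Matrix.mulVecLin_apply]; exact hCl)
    funext i
    cases i with
    | inl i => exact congrFun hz0 i
    | inr i => exact congrFun hl0 i
end

section
/- One step of the Riccati recursion preserves positive definiteness: if S ≻ 0, [A B] has full row rank, and Q is positive definite on the null space of [A B], then S' := F − H G⁻¹ Hᵀ is positive definite, where F = Q₁ + AᵀSA, H = Q₁₂ + AᵀSB, G = Q₂ + BᵀSB. -/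
open Matrix

theorem posDef_fromBlocks₂₂' {m n : ℕ} (A : Matrix (Fin m) (Fin m) ℝ)
    (B : Matrix (Fin m) (Fin n) ℝ) {D : Matrix (Fin n) (Fin n) ℝ} (hD : D.PosDef)
    [Invertible D] (h : (fromBlocks A B Bᴴ D).PosDef) : (A - B * D⁻¹ * Bᴴ).PosDef := by
  refine Matrix.PosDef.of_dotProduct_mulVec_pos ((Matrix.IsHermitian.fromBlocks₂₂ A B hD.1).mp h.1) (fun x hx => ?_)
  have hz : (x ⊕ᵥ -((D⁻¹ * Bᴴ) *ᵥ x)) ≠ 0 := by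
    intro hc
    apply hx
    funext i
    exact congrFun (congrArg (fun f => f ∘ Sum.inl) hc) i
  have := h.dotProduct_mulVec_pos hz
  rw [dotProduct_mulVec, schur_complement_eq₂₂ A B _ _ hD.1] at this
  rw [add_neg_cancel] at this
  simp only [star_zero, zero_vecMul, zero_dotProduct, zero_add] at this
  rwa [← dotProduct_mulVec] at this

/-- One step of the Riccati recursion preserves positive definiteness. -/
theorem stmt4 (n m : ℕ) (Q : Matrix (Fin n ⊕ Fin m) (Fin n ⊕ Fin m) ℝ)
    (Q1 : Matrix (Fin n) (Fin n) ℝ) (Q12 : Matrix (Fin n) (Fin m) ℝ)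
    (Q2 : Matrix (Fin m) (Fin m) ℝ)
    (A : Matrix (Fin n) (Fin n) ℝ) (B : Matrix (Fin n) (Fin m) ℝ)
    (S : Matrix (Fin n) (Fin n) ℝ)
    (hQ : Q = Matrix.fromBlocks Q1 Q12 Q12ᵀ Q2)
    (hQsym : Q.IsSymm) (hQpsd : Q.PosSemidef) (hS : S.PosDef)
    (hrank : (Matrix.fromCols A B).rank = n)
    (hQnull : ∀ z : (Fin n ⊕ Fin m) → ℝ, z ≠ 0 →
        (Matrix.fromCols A B).mulVec z = 0 → 0 < z ⬝ᵥ Q.mulVec z) :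
    ((Q1 + Aᵀ * S * A) -
      (Q12 + Aᵀ * S * B) * (Q2 + Bᵀ * S * B)⁻¹ * (Q12 + Aᵀ * S * B)ᵀ).PosDef := by
  set L := Matrix.fromCols A B with hL
  set F := Q1 + Aᵀ * S * A with hF
  set H := Q12 + Aᵀ * S * B with hH
  set G := Q2 + Bᵀ * S * B with hG
  have hSt : Sᵀ = S := (conjTranspose_eq_transpose_of_trivial S).symm.trans hS.1
  -- key matrix identity
  have hM : Matrix.fromBlocks F H Hᵀ G = Q + Lᵀ * S * L := by
    rw [hQ, hL, transpose_fromCols, Matrix.mul_assoc,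
      mul_fromCols, fromRows_mul_fromCols, fromBlocks_add]
    congr 1 <;> simp [Matrix.mul_assoc, hF, hH, hG, hSt]
  -- quadratic form of M
  have hquad : ∀ z, z ⬝ᵥ (Matrix.fromBlocks F H Hᵀ G) *ᵥ z
      = z ⬝ᵥ Q *ᵥ z + (L *ᵥ z) ⬝ᵥ S *ᵥ (L *ᵥ z) := by
    intro z
    rw [hM, add_mulVec, dotProduct_add, Matrix.mul_assoc]
    congr 1
    rw [← Matrix.mulVec_mulVec, dotProduct_mulVec, vecMul_transpose,
      ← Matrix.mulVec_mulVec]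
  -- M is PosDef
  have hMpd : (Matrix.fromBlocks F H Hᵀ G).PosDef := by
    refine Matrix.PosDef.of_dotProduct_mulVec_pos ?_ ?_
    · rw [hM, ← conjTranspose_eq_transpose_of_trivial L]
      exact hQpsd.1.add (isHermitian_conjTranspose_mul_mul L hS.1)
    · intro z hz
      show (0:ℝ) < star z ⬝ᵥ _
      rw [star_trivial, hquad]
      by_cases hw : L *ᵥ z = 0
      · refine add_pos_of_pos_of_nonneg (hQnull z hz hw) ?_
        rw [hw]; simp
      · refine add_pos_of_nonneg_of_pos ?_ ?_
        · have := hQpsd.dotProduct_mulVec_nonneg z; rwa [star_trivial] at this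
        · have := hS.dotProduct_mulVec_pos hw; rwa [star_trivial] at this
  -- G is PosDef
  have hGpd : G.PosDef := by
    refine Matrix.PosDef.of_dotProduct_mulVec_pos (isHermitian_fromBlocks_iff.mp hMpd.1).2.2.2 (fun x hx => ?_)
    have hz : ((0 : Fin n → ℝ) ⊕ᵥ x) ≠ 0 := by
      intro hc
      apply hx
      funext i
      exact congrFun (congrArg (fun f => f ∘ Sum.inr) hc) i
    have := hMpd.dotProduct_mulVec_pos hz
    rw [star_trivial] at this ⊢
    rw [fromBlocks_mulVec, sumElim_dotProduct_sumElim] at this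
    simpa using this
  haveI : Invertible G := hGpd.isUnit.invertible
  have hMpd' : (Matrix.fromBlocks F H Hᴴ G).PosDef := by
    rwa [conjTranspose_eq_transpose_of_trivial]
  have := posDef_fromBlocks₂₂' F H hGpd hMpd'
  rwa [conjTranspose_eq_transpose_of_trivial] at this
end

section
/- The maximal cliques of the classical MPC sparsity graph are exactly the sets C_{k+1} = {x_k, u_k, x_{k+1}} for k = 0, …, N−1, and the path C₁ — C₂ — ⋯ — C_N is a clique tree (it satisfies the clique intersection property). -/
/-- The sparsity graph of the classical MPC problem. -/
def mpcGraph (N : ℕ) : SimpleGraph (Fin (N + 1) ⊕ Fin N) :=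
  SimpleGraph.fromRel (fun a b => ∃ k : Fin N,
    (a = Sum.inl k.castSucc ∧ b = Sum.inr k) ∨
    (a = Sum.inr k ∧ b = Sum.inl k.succ) ∨
    (a = Sum.inl k.castSucc ∧ b = Sum.inl k.succ))

/-- The clique C_{k+1} = {x_k, u_k, x_{k+1}}. -/
def mpcClique (N : ℕ) (k : Fin N) : Set (Fin (N + 1) ⊕ Fin N) :=
  {Sum.inl k.castSucc, Sum.inr k, Sum.inl k.succ}

lemma mem_mpcClique_iff {N : ℕ} {k : Fin N} {x : Fin (N + 1) ⊕ Fin N} :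
    x ∈ mpcClique N k ↔ x = Sum.inl k.castSucc ∨ x = Sum.inr k ∨ x = Sum.inl k.succ := by
  simp [mpcClique]

lemma adj_inl_inr {N : ℕ} {a : Fin (N + 1)} {k : Fin N} :
    (mpcGraph N).Adj (Sum.inl a) (Sum.inr k) ↔ a.val = k.val ∨ a.val = k.val + 1 := by
  constructor
  · intro h
    rw [mpcGraph, SimpleGraph.fromRel_adj] at h
    obtain ⟨-, h | h⟩ := h <;> obtain ⟨j, h⟩ := h
    · rcases h with ⟨h1, h2⟩ | ⟨h1, h2⟩ | ⟨h1, h2⟩ <;> simp_all [Fin.ext_iff]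
    · rcases h with ⟨h1, h2⟩ | ⟨h1, h2⟩ | ⟨h1, h2⟩ <;> simp_all [Fin.ext_iff]
  · intro h
    rw [mpcGraph, SimpleGraph.fromRel_adj]
    refine ⟨by simp, ?_⟩
    rcases h with h | h
    · exact Or.inl ⟨k, Or.inl ⟨by simp [Fin.ext_iff, h], rfl⟩⟩
    · exact Or.inr ⟨k, Or.inr (Or.inl ⟨rfl, by simp [Fin.ext_iff, h]⟩)⟩

lemma not_adj_inr_inr {N : ℕ} {j k : Fin N} :
    ¬ (mpcGraph N).Adj (Sum.inr j) (Sum.inr k) := by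
  rw [mpcGraph, SimpleGraph.fromRel_adj]
  rintro ⟨-, h | h⟩ <;> obtain ⟨i, h⟩ := h <;>
    rcases h with ⟨h1, h2⟩ | ⟨h1, h2⟩ | ⟨h1, h2⟩ <;> simp_all

lemma adj_inl_inl {N : ℕ} {a b : Fin (N + 1)} :
    (mpcGraph N).Adj (Sum.inl a) (Sum.inl b) ↔ a.val + 1 = b.val ∨ b.val + 1 = a.val := by
  constructor
  · intro h
    rw [mpcGraph, SimpleGraph.fromRel_adj] at h
    obtain ⟨-, h | h⟩ := h <;> obtain ⟨j, h⟩ := h <;>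
      rcases h with ⟨h1, h2⟩ | ⟨h1, h2⟩ | ⟨h1, h2⟩ <;> simp_all [Fin.ext_iff]
  · intro h
    rw [mpcGraph, SimpleGraph.fromRel_adj]
    rcases h with h | h
    · have ha : a.val < N := by omega
      exact ⟨by simp [Fin.ext_iff]; omega,
        Or.inl ⟨⟨a.val, ha⟩, Or.inr (Or.inr ⟨by simp [Fin.ext_iff], by simp [Fin.ext_iff]; omega⟩)⟩⟩
    · have hb : b.val < N := by omega
      exact ⟨by simp [Fin.ext_iff]; omega,
        Or.inr ⟨⟨b.val, hb⟩, Or.inr (Or.inr ⟨by simp [Fin.ext_iff], by simp [Fin.ext_iff]; omega⟩)⟩⟩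

lemma mpcClique_isClique {N : ℕ} (k : Fin N) : (mpcGraph N).IsClique (mpcClique N k) := by
  intro x hx y hy hxy
  rw [mem_mpcClique_iff] at hx hy
  have h1 : (mpcGraph N).Adj (Sum.inl k.castSucc) (Sum.inr k) :=
    adj_inl_inr.mpr (Or.inl (by simp))
  have h2 : (mpcGraph N).Adj (Sum.inl k.succ) (Sum.inr k) :=
    adj_inl_inr.mpr (Or.inr (by simp))
  have h3 : (mpcGraph N).Adj (Sum.inl k.castSucc) (Sum.inl k.succ) :=
    adj_inl_inl.mpr (Or.inl (by simp))
  rcases hx with rfl | rfl | rfl <;> rcases hy with rfl | rfl | rfl <;>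
    first
      | exact absurd rfl hxy
      | exact h1
      | exact h2
      | exact h3
      | exact h1.symm
      | exact h2.symm
      | exact h3.symm

/-- A clique containing `inr k` is inside `mpcClique N k`. -/
lemma clique_subset_of_inr_mem {N : ℕ} {s : Set (Fin (N + 1) ⊕ Fin N)} {k : Fin N}
    (hs : (mpcGraph N).IsClique s) (hk : Sum.inr k ∈ s) : s ⊆ mpcClique N k := by
  intro x hx
  rw [mem_mpcClique_iff]
  by_cases hxk : x = Sum.inr k
  · exact Or.inr (Or.inl hxk)
  · rcases x with a | j
    · have hadj := hs hx hk hxk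
      rw [adj_inl_inr] at hadj
      rcases hadj with h | h
      · exact Or.inl (by simp [Fin.ext_iff, h])
      · exact Or.inr (Or.inr (by simp [Fin.ext_iff, h]))
    · exact absurd (hs hx hk hxk) not_adj_inr_inr

/-- Every clique is contained in some `mpcClique`. -/
lemma clique_subset {N : ℕ} (hN : 1 ≤ N) {s : Set (Fin (N + 1) ⊕ Fin N)}
    (hs : (mpcGraph N).IsClique s) : ∃ k : Fin N, s ⊆ mpcClique N k := by
  by_cases hr : ∃ k : Fin N, Sum.inr k ∈ s
  · obtain ⟨k, hk⟩ := hr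
    exact ⟨k, clique_subset_of_inr_mem hs hk⟩
  · push_neg at hr
    have hall : ∀ x ∈ s, ∃ a : Fin (N + 1), x = Sum.inl a := by
      rintro (a | j) hx
      · exact ⟨a, rfl⟩
      · exact absurd hx (hr j)
    rcases Set.eq_empty_or_nonempty s with rfl | ⟨x, hx⟩
    · exact ⟨⟨0, hN⟩, by simp⟩
    obtain ⟨a, rfl⟩ := hall x hx
    by_cases hb : ∃ b : Fin (N + 1), Sum.inl b ∈ s ∧ b.val + 1 = a.val
    · obtain ⟨b, hbs, hba⟩ := hb
      have hbN : b.val < N := by omega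
      refine ⟨⟨b.val, hbN⟩, ?_⟩
      intro c hc
      obtain ⟨cv, rfl⟩ := hall c hc
      rw [mem_mpcClique_iff]
      by_cases hca : cv = a
      · subst hca; exact Or.inr (Or.inr (by simp [Fin.ext_iff]; omega))
      by_cases hcb : cv = b
      · subst hcb; exact Or.inl (by simp [Fin.ext_iff])
      · have h1 := hs hc hx (by simpa using hca)
        have h2 := hs hc hbs (by simpa using hcb)
        rw [adj_inl_inl] at h1 h2
        have hne1 : cv.val ≠ a.val := fun h => hca (Fin.ext h)
        have hne2 : cv.val ≠ b.val := fun h => hcb (Fin.ext h)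
        omega
    · push_neg at hb
      by_cases haN : a.val < N
      · refine ⟨⟨a.val, haN⟩, ?_⟩
        intro c hc
        obtain ⟨cv, rfl⟩ := hall c hc
        rw [mem_mpcClique_iff]
        by_cases hca : cv = a
        · subst hca; exact Or.inl (by simp [Fin.ext_iff])
        · have h1 := hs hc hx (by simpa using hca)
          rw [adj_inl_inl] at h1
          rcases h1 with h1 | h1
          · exact absurd h1 (hb cv hc)
          · exact Or.inr (Or.inr (by simp [Fin.ext_iff]; omega))
      · have haN' : a.val = N := by omega
        refine ⟨⟨N - 1, by omega⟩, ?_⟩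
        intro c hc
        obtain ⟨cv, rfl⟩ := hall c hc
        rw [mem_mpcClique_iff]
        by_cases hca : cv = a
        · subst hca; exact Or.inr (Or.inr (by simp [Fin.ext_iff]; omega))
        · have h1 := hs hc hx (by simpa using hca)
          rw [adj_inl_inl] at h1
          rcases h1 with h1 | h1
          · exact absurd h1 (hb cv hc)
          · omega

/-- The maximal cliques of the classical MPC sparsity graph are exactly the sets
C_{k+1} = {x_k, u_k, x_{k+1}}, and the chain C₁ — C₂ — ⋯ — C_N satisfies the clique
intersection property. -/
theorem stmt10 (N : ℕ) (hN : 1 ≤ N) :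
    (∀ s : Set (Fin (N + 1) ⊕ Fin N),
        ((mpcGraph N).IsClique s ∧
          ∀ t : Set (Fin (N + 1) ⊕ Fin N), (mpcGraph N).IsClique t → s ⊆ t → t = s) ↔
        ∃ k : Fin N, s = mpcClique N k) ∧
    (∀ i j k : Fin N, i ≤ k → k ≤ j →
        mpcClique N i ∩ mpcClique N j ⊆ mpcClique N k) := by
  constructor
  · intro s
    constructor
    · rintro ⟨hcl, hmax⟩
      obtain ⟨k, hsub⟩ := clique_subset hN hcl
      exact ⟨k, (hmax _ (mpcClique_isClique k) hsub).symm⟩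
    · rintro ⟨k, rfl⟩
      refine ⟨mpcClique_isClique k, fun t ht hsub => ?_⟩
      have hk : Sum.inr k ∈ t := hsub (by rw [mem_mpcClique_iff]; tauto)
      exact Set.Subset.antisymm (clique_subset_of_inr_mem ht hk) hsub
  · intro i j k hik hkj x ⟨hxi, hxj⟩
    rw [mem_mpcClique_iff] at hxi hxj ⊢
    have hik' : i.val ≤ k.val := hik
    have hkj' : k.val ≤ j.val := hkj
    rcases x with a | m
    · have h1 : a.val = i.val ∨ a.val = i.val + 1 := by
        rcases hxi with h | h | h <;> simp_all [Fin.ext_iff]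
      have h2 : a.val = j.val ∨ a.val = j.val + 1 := by
        rcases hxj with h | h | h <;> simp_all [Fin.ext_iff]
      have : a.val = k.val ∨ a.val = k.val + 1 := by omega
      rcases this with h | h
      · exact Or.inl (by simp [Fin.ext_iff, h])
      · exact Or.inr (Or.inr (by simp [Fin.ext_iff, h]))
    · have h1 : m = i := by rcases hxi with h | h | h <;> simp_all
      have h2 : m = j := by rcases hxj with h | h | h <;> simp_all
      have hval1 := congrArg Fin.val h1
      have hval2 := congrArg Fin.val h2
      have hki : k = i := Fin.ext (by omega)
      exact Or.inr (Or.inl (by rw [h1, hki]))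
end
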